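/- arXiv:1510.01809 — 2 statements merged into one kernel-verified Lean document; each statement's English description precedes it below -/
import Mathlib

section
/- Let $I$ be a nonnegative random variable with density $k$ and let $U$ be a $\sigma$-finite measure on $\mathbb{R}$ satisfying the functional equation $\int_t^\infty k(s)\,ds=\int_{\mathbb{R}}k(te^{-y})\,U(dy)$ for a.e. $t>0$. Suppose $\beta\in\mathbb{C}$ with $\operatorname{Re}\beta>0$ is such that $\int_{\mathbb{R}}e^{(\operatorname{Re}\beta)y}U(dy)<\infty$ and $\mathbb{E}(I^{\operatorname{Re}\beta})<\infty$. Then $\mathbb{E}(I^{\beta})=\beta\,\Big(\int_{\mathbb{R}}e^{\beta y}U(dy)\Big)\,\mathbb{E}(I^{\beta-1})$. -/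
open MeasureTheory Real Set ENNReal Complex

/-!
Write `𝓜 f s = ∫₀^∞ t^(s-1) f(t) dt` for the Mellin transform and `K̄(s) = ∫ₛ^∞ k` for the
tail of the density. Fubini on `{0 < s < t}` gives `𝓜 k (β+1) = β 𝓜 K̄ β`. The functional
equation writes `K̄(s)` as `∫ k(s e^{-y}) U(dy)`, and Fubini together with the dilation rule
`𝓜 (k(c ·)) β = c^(-β) 𝓜 k β` turns `𝓜 K̄ β` into `(∫ e^{βy} U(dy)) 𝓜 k β`.

The only delicate point is that `𝓜 k β` converges, although just the moment of order `Re β`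
is assumed finite. Away from `0` the moment of order `Re β - 1` is dominated by that one. Near `0`,
`K̄` is pinched between two positive constants on some `(0, ε)` (so the integrals in the functional
equation converge there), and the Tonelli form of the same computation over `s ∈ (0, ε)` yields a
finite positive number which would be `(∫ e^{(Re β) y} U(dy)) · ∞` if the moment diverged near `0`.
-/

theorem enorm_ofReal_cpow_of_pos {t : ℝ} (ht : 0 < t) (s : ℂ) :
    ‖(t : ℂ) ^ s‖ₑ = ENNReal.ofReal (t ^ s.re) := by
  rw [← ofReal_norm, norm_cpow_eq_rpow_re_of_pos ht]

theorem Complex.enorm_ofReal_of_nonneg {x : ℝ} (hx : 0 ≤ x) :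
    ‖(x : ℂ)‖ₑ = ENNReal.ofReal x := by
  rw [← ofReal_norm, Complex.norm_real, Real.norm_of_nonneg hx]

theorem ofReal_exp_cpow (x : ℝ) (z : ℂ) : ((Real.exp x : ℝ) : ℂ) ^ z = Complex.exp (x * z) := by
  rw [cpow_def_of_ne_zero (by exact_mod_cast (Real.exp_pos x).ne'),
    ← ofReal_log (Real.exp_pos x).le, Real.log_exp]

theorem integral_Ioo_cpow_sub_one {β : ℂ} (hβ : 0 < β.re) {t : ℝ} (ht : 0 ≤ t) :
    ∫ s in Ioo 0 t, (s : ℂ) ^ (β - 1) = (t : ℂ) ^ β / β := by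
  have hβ0 : β ≠ 0 := fun h => by simp [h] at hβ
  rw [← integral_Ioc_eq_integral_Ioo, ← intervalIntegral.integral_of_le ht,
    integral_cpow (Or.inl (by simpa using hβ)), sub_add_cancel, Complex.ofReal_zero,
    zero_cpow hβ0, sub_zero]

theorem lintegral_Ioo_rpow_sub_one {ρ : ℝ} (hρ : 0 < ρ) {t : ℝ} (ht : 0 ≤ t) :
    ∫⁻ s in Ioo 0 t, ENNReal.ofReal (s ^ (ρ - 1)) = ENNReal.ofReal (t ^ ρ / ρ) := by
  rcases ht.eq_or_lt with rfl | ht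
  · simp [zero_rpow hρ.ne']
  have hint : IntegrableOn (fun s : ℝ => s ^ (ρ - 1)) (Ioo 0 t) :=
    (intervalIntegral.integrableOn_Ioo_rpow_iff ht).2 (by linarith)
  rw [← ofReal_integral_eq_lintegral_ofReal hint
      ((ae_restrict_iff' measurableSet_Ioo).2 (.of_forall fun s hs => rpow_nonneg hs.1.le _)),
    ← integral_Ioc_eq_integral_Ioo, ← intervalIntegral.integral_of_le ht.le,
    integral_rpow (Or.inl (by linarith)), sub_add_cancel, zero_rpow hρ.ne', sub_zero]

theorem setLIntegral_rpow_mul_comp_mul_right {f : ℝ → ℝ≥0∞} (hf : Measurable f) (σ : ℝ)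
    {c : ℝ} (hc : 0 < c) {S : Set ℝ} (hS : MeasurableSet S) (hS0 : S ⊆ Ioi 0) :
    ∫⁻ s in (· * c) ⁻¹' S, ENNReal.ofReal (s ^ (σ - 1)) * f (s * c) =
      ENNReal.ofReal (c ^ (-σ)) * ∫⁻ u in S, ENNReal.ofReal (u ^ (σ - 1)) * f u := by
  have hg : Measurable fun u : ℝ => ENNReal.ofReal (u ^ (σ - 1)) * f u :=
    (measurable_id.pow_const _).ennreal_ofReal.mul hf
  have hpt : ∀ s ∈ (· * c) ⁻¹' S, ENNReal.ofReal (s ^ (σ - 1)) * f (s * c) =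
      ENNReal.ofReal (c ^ (1 - σ)) * (ENNReal.ofReal ((s * c) ^ (σ - 1)) * f (s * c)) := by
    intro s hs
    have hs0 : 0 < s := pos_of_mul_pos_left (hS0 hs) hc.le
    rw [← mul_assoc, ← ENNReal.ofReal_mul (by positivity), mul_rpow hs0.le hc.le,
      mul_left_comm, ← rpow_add hc, sub_add_sub_cancel', sub_self, Real.rpow_zero, mul_one]
  calc ∫⁻ s in (· * c) ⁻¹' S, ENNReal.ofReal (s ^ (σ - 1)) * f (s * c)
      = ENNReal.ofReal (c ^ (1 - σ)) *
          ∫⁻ s in (· * c) ⁻¹' S, ENNReal.ofReal ((s * c) ^ (σ - 1)) * f (s * c) := by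
        rw [setLIntegral_congr_fun (hS.preimage (measurable_mul_const c)) hpt,
          lintegral_const_mul' _ _ ofReal_ne_top]
    _ = ENNReal.ofReal (c ^ (1 - σ)) *
          (ENNReal.ofReal c⁻¹ * ∫⁻ u in S, ENNReal.ofReal (u ^ (σ - 1)) * f u) := by
        rw [← setLIntegral_map hS hg (measurable_mul_const c), Real.map_volume_mul_right hc.ne',
          Measure.restrict_smul, lintegral_smul_measure, abs_of_pos (inv_pos.2 hc), smul_eq_mul]
    _ = _ := by
        rw [← mul_assoc, ← ENNReal.ofReal_mul (by positivity), ← Real.rpow_neg_one,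
          ← rpow_add hc]
        ring_nf

theorem setLIntegral_Ioo_rpow_sub_one_mul_lintegral_comp_mul_exp_neg {g : ℝ → ℝ≥0∞}
    (hg : Measurable g) (U : Measure ℝ) [SFinite U] (ρ : ℝ) (ε : ℝ) :
    ∫⁻ s in Ioo 0 ε, ENNReal.ofReal (s ^ (ρ - 1)) * ∫⁻ y, g (s * Real.exp (-y)) ∂U =
      ∫⁻ y, ENNReal.ofReal (Real.exp (ρ * y)) *
        (∫⁻ u in Ioo 0 (ε * Real.exp (-y)), ENNReal.ofReal (u ^ (ρ - 1)) * g u) ∂U := by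
  calc _ = ∫⁻ s in Ioo 0 ε, ∫⁻ y, ENNReal.ofReal (s ^ (ρ - 1)) * g (s * Real.exp (-y)) ∂U :=
        lintegral_congr fun s => (lintegral_const_mul' _ _ ofReal_ne_top).symm
    _ = ∫⁻ y, (∫⁻ s in Ioo 0 ε, ENNReal.ofReal (s ^ (ρ - 1)) * g (s * Real.exp (-y))) ∂U :=
        lintegral_lintegral_swap
          (f := fun s y => ENNReal.ofReal (s ^ (ρ - 1)) * g (s * Real.exp (-y)))
          ((measurable_fst.pow_const _).ennreal_ofReal.mul
            (hg.comp (measurable_fst.mul measurable_snd.neg.exp))).aemeasurable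
    _ = _ := lintegral_congr fun y => ?_
  have hscale := setLIntegral_rpow_mul_comp_mul_right hg ρ (Real.exp_pos (-y))
    (measurableSet_Ioo (a := 0) (b := ε * Real.exp (-y))) fun x hx => hx.1
  rwa [preimage_mul_const_Ioo₀ _ _ (Real.exp_pos _), zero_div,
    mul_div_cancel_right₀ _ (Real.exp_pos _).ne', ← Real.exp_mul, neg_mul_neg,
    mul_comm y] at hscale

theorem setLIntegral_Ioi_rpow_sub_one_mul_le (g : ℝ → ℝ≥0∞) (ρ : ℝ) {m : ℝ} (hm : 0 < m) :
    ∫⁻ u in Ioi 0, ENNReal.ofReal (u ^ (ρ - 1)) * g u ≤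
      (∫⁻ u in Ioo 0 m, ENNReal.ofReal (u ^ (ρ - 1)) * g u) +
        ENNReal.ofReal m⁻¹ * ∫⁻ u in Ioi 0, ENNReal.ofReal (u ^ ρ) * g u := by
  have tail_le : ∫⁻ u in Ici m, ENNReal.ofReal (u ^ (ρ - 1)) * g u ≤
      ENNReal.ofReal m⁻¹ * ∫⁻ u in Ioi 0, ENNReal.ofReal (u ^ ρ) * g u := by
    calc ∫⁻ u in Ici m, ENNReal.ofReal (u ^ (ρ - 1)) * g u
        ≤ ∫⁻ u in Ici m, ENNReal.ofReal m⁻¹ * (ENNReal.ofReal (u ^ ρ) * g u) := by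
          refine setLIntegral_mono' measurableSet_Ici fun u hu => ?_
          have hu0 : 0 < u := hm.trans_le hu
          rw [← mul_assoc, ← ENNReal.ofReal_mul (by positivity), rpow_sub_one hu0.ne',
            div_eq_inv_mul]
          gcongr
          exact hu
      _ ≤ ENNReal.ofReal m⁻¹ * ∫⁻ u in Ioi 0, ENNReal.ofReal (u ^ ρ) * g u := by
          rw [lintegral_const_mul' _ _ ofReal_ne_top]
          gcongr
  calc ∫⁻ u in Ioi 0, ENNReal.ofReal (u ^ (ρ - 1)) * g u
      ≤ (∫⁻ u in Ioo 0 m, ENNReal.ofReal (u ^ (ρ - 1)) * g u) +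
          ∫⁻ u in Ici m, ENNReal.ofReal (u ^ (ρ - 1)) * g u := by
        rw [← Ioo_union_Ici_eq_Ioi hm]
        exact lintegral_union_le _ _ _
    _ ≤ _ := by gcongr

theorem exists_pos_setIntegral_Ioi_pos {f : ℝ → ℝ} (hf : 0 < ∫ t in Ioi 0, f t) :
    ∃ ε > 0, 0 < ∫ t in Ioi ε, f t := by
  have hmono : Monotone fun n : ℕ => Ioi (1 / ((n : ℝ) + 1)) := fun n m hnm =>
    Ioi_subset_Ioi (one_div_le_one_div_of_le (by positivity) (by gcongr))
  have hunion : ⋃ n : ℕ, Ioi (1 / ((n : ℝ) + 1)) = Ioi 0 := by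
    refine Subset.antisymm (iUnion_subset fun n => Ioi_subset_Ioi (by positivity)) fun x hx => ?_
    obtain ⟨n, hn⟩ := exists_nat_one_div_lt (mem_Ioi.1 hx)
    exact mem_iUnion.2 ⟨n, hn⟩
  have hlim := tendsto_setIntegral_of_monotone (fun _ => measurableSet_Ioi) hmono
    (hunion ▸ Integrable.of_integral_ne_zero hf.ne')
  rw [hunion] at hlim
  obtain ⟨n, hn⟩ := (hlim.eventually (lt_mem_nhds hf)).exists
  exact ⟨_, by positivity, hn⟩

theorem setLIntegral_Ioo_rpow_sub_one_mul_pos_and_lt_top {ρ : ℝ} (hρ : 0 < ρ) {ε : ℝ}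
    (hε : 0 < ε) {K : ℝ → ℝ} {a b : ℝ} (ha : 0 < a) (hK : ∀ s ∈ Ioo 0 ε, a ≤ K s ∧ K s ≤ b) :
    0 < ∫⁻ s in Ioo 0 ε, ENNReal.ofReal (s ^ (ρ - 1)) * ENNReal.ofReal (K s) ∧
      ∫⁻ s in Ioo 0 ε, ENNReal.ofReal (s ^ (ρ - 1)) * ENNReal.ofReal (K s) < ⊤ := by
  have const : ∀ c, ∫⁻ s in Ioo 0 ε, ENNReal.ofReal (s ^ (ρ - 1)) * ENNReal.ofReal c =
      ENNReal.ofReal (ε ^ ρ / ρ) * ENNReal.ofReal c := fun c => by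
    rw [lintegral_mul_const' _ _ ofReal_ne_top, lintegral_Ioo_rpow_sub_one hρ hε.le]
  constructor
  · calc 0 < ENNReal.ofReal (ε ^ ρ / ρ) * ENNReal.ofReal a :=
          mul_pos (ENNReal.ofReal_pos.2 (by positivity)).ne' (ENNReal.ofReal_pos.2 ha).ne'
      _ = ∫⁻ s in Ioo 0 ε, ENNReal.ofReal (s ^ (ρ - 1)) * ENNReal.ofReal a := (const a).symm
      _ ≤ _ := setLIntegral_mono' measurableSet_Ioo fun s hs =>
          mul_le_mul_right (ENNReal.ofReal_le_ofReal (hK s hs).1) _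
  · calc _ ≤ ∫⁻ s in Ioo 0 ε, ENNReal.ofReal (s ^ (ρ - 1)) * ENNReal.ofReal b :=
          setLIntegral_mono' measurableSet_Ioo fun s hs =>
            mul_le_mul_right (ENNReal.ofReal_le_ofReal (hK s hs).2) _
      _ = ENNReal.ofReal (ε ^ ρ / ρ) * ENNReal.ofReal b := const b
      _ < ⊤ := mul_lt_top ofReal_lt_top ofReal_lt_top

section

variable {E : Type*} [NormedAddCommGroup E] [NormedSpace ℂ E]

theorem mellinConvergent_iff_setLIntegral_lt_top {f : ℝ → E}
    (hf : AEStronglyMeasurable f (volume.restrict (Ioi 0))) {s : ℂ} :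
    MellinConvergent f s ↔ ∫⁻ t in Ioi 0, ENNReal.ofReal (t ^ (s.re - 1)) * ‖f t‖ₑ < ⊤ := by
  have hm : AEStronglyMeasurable (fun t : ℝ => (t : ℂ) ^ (s - 1) • f t)
      (volume.restrict (Ioi 0)) :=
    (Complex.measurable_ofReal.pow_const _).aestronglyMeasurable.smul hf
  rw [MellinConvergent, IntegrableOn, Integrable, hasFiniteIntegral_iff_enorm, and_iff_right hm]
  refine Iff.of_eq (congrArg (· < ⊤) (setLIntegral_congr_fun measurableSet_Ioi fun t ht => ?_))
  rw [enorm_smul, enorm_ofReal_cpow_of_pos ht, sub_re, one_re]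

variable [CompleteSpace E]

theorem mellin_add_one_eq_smul_mellin_tail {f : ℝ → E}
    (hf : AEStronglyMeasurable f (volume.restrict (Ioi 0))) {β : ℂ} (hβ : 0 < β.re)
    (hfβ : MellinConvergent f (β + 1)) :
    mellin f (β + 1) = β • mellin (fun s => ∫ t in Ioi s, f t) β := by
  set μ := volume.restrict (Ioi (0 : ℝ))
  set F : ℝ × ℝ → E := {q | q.2 < q.1}.indicator fun q => (q.2 : ℂ) ^ (β - 1) • f q.1
  have F_fst : ∀ t s, F (t, s) = (Iio t).indicator (fun s : ℝ => (s : ℂ) ^ (β - 1)) s • f t := by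
    intro t s; by_cases h : s < t <;> simp [F, h]
  have F_snd : ∀ t s, F (t, s) = (s : ℂ) ^ (β - 1) • (Ioi s).indicator f t := by
    intro t s; by_cases h : s < t <;> simp [F, h]
  have inner_fst : ∀ t ∈ Ioi (0 : ℝ), ∫ s, F (t, s) ∂μ = ((t : ℂ) ^ β / β) • f t := by
    intro t ht
    simp_rw [F_fst]
    rw [integral_smul_const, integral_indicator measurableSet_Iio,
      Measure.restrict_restrict measurableSet_Iio, Iio_inter_Ioi,
      integral_Ioo_cpow_sub_one hβ (le_of_lt ht)]
  have inner_snd : ∀ s ∈ Ioi (0 : ℝ), ∫ t, F (t, s) ∂μ = (s : ℂ) ^ (β - 1) • ∫ t in Ioi s, f t := by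
    intro s hs
    simp_rw [F_snd]
    rw [integral_smul, integral_indicator measurableSet_Ioi,
      Measure.restrict_restrict measurableSet_Ioi, Ioi_inter_Ioi, max_eq_left (le_of_lt hs)]
  have hFm : AEStronglyMeasurable F (μ.prod μ) :=
    (((Complex.measurable_ofReal.comp measurable_snd).pow_const _).aestronglyMeasurable.smul
      hf.comp_fst).indicator (measurableSet_lt measurable_snd measurable_fst)
  have hFint : Integrable F (μ.prod μ) := by
    refine ⟨hFm, ?_⟩
    have inner_enorm : ∀ t ∈ Ioi (0 : ℝ), ∫⁻ s, ‖F (t, s)‖ₑ ∂μ =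
        ENNReal.ofReal β.re⁻¹ * (ENNReal.ofReal (t ^ ((β + 1).re - 1)) * ‖f t‖ₑ) := by
      intro t ht
      have hpt : ∀ s ∈ Ioi (0 : ℝ), ‖F (t, s)‖ₑ =
          (Iio t).indicator (fun s => ENNReal.ofReal (s ^ (β.re - 1))) s * ‖f t‖ₑ := by
        intro s hs
        by_cases h : s < t <;> simp [F_fst, h, enorm_smul, enorm_ofReal_cpow_of_pos hs]
      rw [setLIntegral_congr_fun measurableSet_Ioi hpt, lintegral_mul_const' _ _ enorm_ne_top,
        lintegral_indicator measurableSet_Iio, Measure.restrict_restrict measurableSet_Iio,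
        Iio_inter_Ioi, lintegral_Ioo_rpow_sub_one hβ (le_of_lt ht), div_eq_inv_mul,
        ENNReal.ofReal_mul (by positivity), mul_assoc]
      simp
    rw [hasFiniteIntegral_iff_enorm, lintegral_prod _ hFm.enorm,
      setLIntegral_congr_fun measurableSet_Ioi inner_enorm, lintegral_const_mul' _ _ ofReal_ne_top]
    exact mul_lt_top ofReal_lt_top ((mellinConvergent_iff_setLIntegral_lt_top hf).1 hfβ)
  calc mellin f (β + 1) = ∫ t, β • ∫ s, F (t, s) ∂μ ∂μ := by
        refine setIntegral_congr_fun measurableSet_Ioi fun t ht => ?_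
        rw [inner_fst t ht, smul_smul, mul_div_cancel₀ _ (fun h => by simp [h] at hβ),
          add_sub_cancel_right]
    _ = β • ∫ s, ∫ t, F (t, s) ∂μ ∂μ := by
        rw [integral_smul, integral_integral_swap (f := fun t s => F (t, s)) hFint]
    _ = β • mellin (fun s => ∫ t in Ioi s, f t) β := by
        rw [setIntegral_congr_fun measurableSet_Ioi inner_snd]; rfl

theorem mellin_integral_comp_mul_exp_neg {f : ℝ → E} (hf : StronglyMeasurable f)
    (U : Measure ℝ) [SFinite U] {β : ℂ} (hfβ : MellinConvergent f β)
    (hU : ∫⁻ y, ENNReal.ofReal (Real.exp (β.re * y)) ∂U < ⊤) :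
    mellin (fun s => ∫ y, f (s * Real.exp (-y)) ∂U) β =
      (∫ y, Complex.exp (β * y) ∂U) • mellin f β := by
  set μ := volume.restrict (Ioi (0 : ℝ))
  set G : ℝ × ℝ → E := fun p => (p.1 : ℂ) ^ (β - 1) • f (p.1 * Real.exp (-p.2))
  have hGm : StronglyMeasurable G :=
    ((Complex.measurable_ofReal.comp measurable_fst).pow_const _).stronglyMeasurable.smul
      (hf.comp_measurable (measurable_fst.mul (measurable_snd.neg.exp)))
  have inner_enorm : ∀ y, ∫⁻ s, ‖G (s, y)‖ₑ ∂μ = ENNReal.ofReal (Real.exp (β.re * y)) *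
      ∫⁻ t in Ioi 0, ENNReal.ofReal (t ^ (β.re - 1)) * ‖f t‖ₑ := by
    intro y
    have hscale := setLIntegral_rpow_mul_comp_mul_right hf.enorm β.re (Real.exp_pos (-y))
      measurableSet_Ioi subset_rfl
    rw [preimage_mul_const_Ioi₀ _ (Real.exp_pos _), zero_div, ← Real.exp_mul, neg_mul_neg,
      mul_comm y] at hscale
    rw [← hscale]
    refine setLIntegral_congr_fun measurableSet_Ioi fun s hs => ?_
    rw [enorm_smul, enorm_ofReal_cpow_of_pos hs, sub_re, one_re]
  have hGint : Integrable G (μ.prod U) := by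
    have hfβ' := (mellinConvergent_iff_setLIntegral_lt_top hf.aestronglyMeasurable).1 hfβ
    refine ⟨hGm.aestronglyMeasurable, ?_⟩
    rw [hasFiniteIntegral_iff_enorm, lintegral_prod_symm _ hGm.enorm.aemeasurable]
    simp_rw [inner_enorm]
    rw [lintegral_mul_const' _ _ hfβ'.ne]
    exact mul_lt_top hU hfβ'
  have inner : ∀ y, ∫ s, G (s, y) ∂μ = Complex.exp (β * y) • mellin f β := by
    intro y
    rw [show ∫ s, G (s, y) ∂μ = mellin (fun s => f (s * Real.exp (-y))) β from rfl,
      mellin_comp_mul_right _ _ (Real.exp_pos _), ofReal_exp_cpow, ofReal_neg, neg_mul_neg,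
      mul_comm]
  calc mellin (fun s => ∫ y, f (s * Real.exp (-y)) ∂U) β = ∫ s, ∫ y, G (s, y) ∂U ∂μ := by
        refine integral_congr_ae (.of_forall fun s => ?_)
        exact (integral_smul _ _).symm
    _ = ∫ y, Complex.exp (β * y) • mellin f β ∂U := by
        rw [integral_integral_swap (f := fun s y => G (s, y)) hGint]
        simp_rw [inner]
    _ = (∫ y, Complex.exp (β * y) ∂U) • mellin f β := integral_smul_const _ _

end

theorem mellinConvergent_of_tail_eq_integral_comp_mul_exp_neg {k : ℝ → ℝ} (hk : ∀ t, 0 ≤ k t)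
    (hkm : Measurable k) (hk0 : 0 < ∫ t in Ioi 0, k t) {U : Measure ℝ} [SFinite U]
    (heq : ∀ᵐ t ∂(volume.restrict (Ioi 0)), ∫ s in Ioi t, k s = ∫ y, k (t * Real.exp (-y)) ∂U)
    {β : ℂ} (hβ : 0 < β.re) (hkβ : MellinConvergent (fun t => (k t : ℂ)) (β + 1)) :
    MellinConvergent (fun t => (k t : ℂ)) β := by
  set ρ := β.re
  set g : ℝ → ℝ≥0∞ := fun u => ENNReal.ofReal (k u)
  have hκm : AEStronglyMeasurable (fun t => (k t : ℂ)) (volume.restrict (Ioi 0)) :=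
    (Complex.measurable_ofReal.comp hkm).aestronglyMeasurable
  rw [mellinConvergent_iff_setLIntegral_lt_top hκm] at hkβ ⊢
  simp only [Complex.enorm_ofReal_of_nonneg (hk _), add_re, one_re,
    add_sub_cancel_right] at hkβ ⊢
  by_contra hdiv
  have hdiv_near_zero : ∀ m > 0, ∫⁻ u in Ioo 0 m, ENNReal.ofReal (u ^ (ρ - 1)) * g u = ⊤ :=
    fun m hm => by
      have := setLIntegral_Ioi_rpow_sub_one_mul_le g ρ hm
      rw [top_le_iff.1 (not_lt.1 hdiv), top_le_iff, add_eq_top] at this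
      exact this.resolve_right (mul_lt_top ofReal_lt_top hkβ).ne
  obtain ⟨ε, hε, hkε⟩ := exists_pos_setIntegral_Ioi_pos hk0
  have hkint : IntegrableOn k (Ioi 0) := Integrable.of_integral_ne_zero hk0.ne'
  have tail_bounds : ∀ s ∈ Ioo 0 ε,
      ∫ t in Ioi ε, k t ≤ ∫ t in Ioi s, k t ∧ ∫ t in Ioi s, k t ≤ ∫ t in Ioi 0, k t :=
    fun s hs =>
      ⟨setIntegral_mono_set (hkint.mono_set (Ioi_subset_Ioi hs.1.le)) (.of_forall fun t => hk t)
        (Ioi_subset_Ioi hs.2.le).eventuallyLE,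
      setIntegral_mono_set hkint (.of_forall fun t => hk t) (Ioi_subset_Ioi hs.1.le).eventuallyLE⟩
  have tail_eq : ∀ᵐ s ∂(volume.restrict (Ioo 0 ε)),
      ENNReal.ofReal (∫ t in Ioi s, k t) = ∫⁻ y, g (s * Real.exp (-y)) ∂U := by
    filter_upwards [ae_restrict_of_ae_restrict_of_subset Ioo_subset_Ioi_self heq,
      ae_restrict_mem measurableSet_Ioo] with s hs hsε
    have hpos : 0 < ∫ y, k (s * Real.exp (-y)) ∂U := hs ▸ hkε.trans_le (tail_bounds s hsε).1
    rw [hs, ofReal_integral_eq_lintegral_ofReal (Integrable.of_integral_ne_zero hpos.ne')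
      (.of_forall fun y => hk _)]
  obtain ⟨hA_pos, hA_fin⟩ := setLIntegral_Ioo_rpow_sub_one_mul_pos_and_lt_top hβ hε hkε tail_bounds
  have hA : ∫⁻ s in Ioo 0 ε, ENNReal.ofReal (s ^ (ρ - 1)) * ENNReal.ofReal (∫ t in Ioi s, k t) =
      (∫⁻ y, ENNReal.ofReal (Real.exp (ρ * y)) ∂U) * ⊤ := by
    rw [lintegral_congr_ae (tail_eq.mono fun s hs => by rw [hs]),
      setLIntegral_Ioo_rpow_sub_one_mul_lintegral_comp_mul_exp_neg hkm.ennreal_ofReal U ρ ε,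
      ← lintegral_mul_const _ (by fun_prop)]
    exact lintegral_congr fun y => by rw [hdiv_near_zero _ (by positivity)]
  rcases eq_or_ne (∫⁻ y, ENNReal.ofReal (Real.exp (ρ * y)) ∂U) 0 with h | h
  · rw [h, zero_mul] at hA
    exact hA_pos.ne' hA
  · rw [mul_top h] at hA
    exact hA_fin.ne hA

/-- the functional equation
`∫_t^∞ k(s) ds = ∫_ℝ k(t e^{-y}) U(dy)` (a.e. `t > 0`) implies the moment recurrence
`E(I^β) = β (∫ e^{βy} U(dy)) E(I^{β-1})` for complex `β` with `Re β > 0`, under the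
stated finiteness conditions. -/
theorem moment_recurrence
    (k : ℝ → ℝ) (hk : ∀ t, 0 ≤ k t) (hkmeas : Measurable k)
    (hkdens : ∫ t in Set.Ioi (0 : ℝ), k t = 1)
    (U : Measure ℝ) [SigmaFinite U]
    (heq : ∀ᵐ t ∂(volume.restrict (Set.Ioi (0 : ℝ))),
      (∫ s in Set.Ioi t, k s) = ∫ y, k (t * Real.exp (-y)) ∂U)
    (β : ℂ) (hβ : 0 < β.re)
    (hUfin : (∫⁻ y, ENNReal.ofReal (Real.exp (β.re * y)) ∂U) < ⊤)
    (hIfin : (∫⁻ t in Set.Ioi (0 : ℝ), ENNReal.ofReal (t ^ β.re * k t)) < ⊤) :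
    (∫ t in Set.Ioi (0 : ℝ), (t : ℂ) ^ β * (k t : ℂ)) =
      β * (∫ y, Complex.exp (β * (y : ℂ)) ∂U) *
        ∫ t in Set.Ioi (0 : ℝ), (t : ℂ) ^ (β - 1) * (k t : ℂ) := by
  set κ : ℝ → ℂ := fun t => (k t : ℂ)
  have hκ : StronglyMeasurable κ := (Complex.measurable_ofReal.comp hkmeas).stronglyMeasurable
  have hκβ1 : MellinConvergent κ (β + 1) := by
    rw [mellinConvergent_iff_setLIntegral_lt_top hκ.aestronglyMeasurable]
    refine lt_of_eq_of_lt (setLIntegral_congr_fun measurableSet_Ioi fun t ht => ?_) hIfin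
    rw [add_re, one_re, add_sub_cancel_right, ENNReal.ofReal_mul (rpow_nonneg (le_of_lt ht) _),
      Complex.enorm_ofReal_of_nonneg (hk t)]
  have hκβ : MellinConvergent κ β := mellinConvergent_of_tail_eq_integral_comp_mul_exp_neg hk
    hkmeas (hkdens ▸ one_pos) heq hβ hκβ1
  have htail : mellin (fun s => ∫ t in Ioi s, κ t) β =
      mellin (fun s => ∫ y, κ (s * Real.exp (-y)) ∂U) β :=
    integral_congr_ae (heq.mono fun s hs => by
      dsimp only [κ]; rw [integral_complex_ofReal, integral_complex_ofReal, hs])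
  calc ∫ t in Ioi (0 : ℝ), (t : ℂ) ^ β * κ t
      = mellin κ (β + 1) := by simp only [mellin, add_sub_cancel_right, smul_eq_mul]
    _ = β * mellin (fun s => ∫ y, κ (s * Real.exp (-y)) ∂U) β := by
      rw [mellin_add_one_eq_smul_mellin_tail hκ.aestronglyMeasurable hβ hκβ1, htail, smul_eq_mul]
    _ = β * (∫ y, Complex.exp (β * y) ∂U) * mellin κ β := by
      rw [mellin_integral_comp_mul_exp_neg hκ U hκβ hUfin, smul_eq_mul, mul_assoc]
end

section
/- Suppose $I$ is a nonnegative random variable that satisfies the perpetuity equation $I\stackrel{d}{=}Q+M\widetilde I$ with $(Q,M)$ independent of $\widetilde I\stackrel{d}{=}I$, $Q\ge0$, $M\ge 0$, and $\mathbb{P}(M>1)>0$. Then $\liminf_{t\to\infty}\frac{\log\mathbb{P}(I>t)}{\log t}>-\infty$, i.e. the tail of $I$ is at least of power-law (Pareto) type. -/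
/-!
With `p = P(M > 1 + ε) > 0`, independence gives
`P(I > (1 + ε) t) = P(Q + M Ĩ > (1 + ε) t) ≥ P(M > 1 + ε, Ĩ > t) = p P(I > t)` for `t ≥ 0`.
Iterating, `P(I > (1 + ε)ⁿ) ≥ pⁿ P(I > 1)`, so the tail decays at most like the power
`t ^ (log p / log (1 + ε))`.
-/

open MeasureTheory Real Set Filter Topology ProbabilityTheory

theorem exists_pos_measure_add_lt {α : Type*} [MeasurableSpace α] {μ : Measure α} {f : α → ℝ}
    {a : ℝ} (h : 0 < μ {x | a < f x}) : ∃ ε > 0, 0 < μ {x | a + ε < f x} := by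
  by_contra! hε
  have hcover : {x | a < f x} ⊆ ⋃ n : ℕ, {x | a + 1 / (n + 1) < f x} := fun x hx => by
    obtain ⟨n, hn⟩ := exists_nat_one_div_lt (sub_pos.mpr (show a < f x from hx))
    exact mem_iUnion.mpr ⟨n, show a + 1 / (n + 1) < f x by linarith⟩
  refine h.ne' (measure_mono_null hcover (measure_iUnion_null_iff.mpr fun n => ?_))
  exact nonpos_iff_eq_zero.mp (hε _ (by positivity))

theorem measure_lt_mul_measure_lt_le_of_perpetuity {Ω : Type*} [MeasurableSpace Ω]
    {μ : Measure Ω} {I Itld Q M : Ω → ℝ} (hIm : Measurable I) (hItldm : Measurable Itld)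
    (hQm : Measurable Q) (hMm : Measurable M) (hQ0 : ∀ ω, 0 ≤ Q ω)
    (hindep : IndepFun (fun ω => (Q ω, M ω)) Itld μ) (hsame : μ.map Itld = μ.map I)
    (hperp : μ.map I = μ.map (fun ω => Q ω + M ω * Itld ω)) {c t : ℝ} (hc : 0 ≤ c) (ht : 0 ≤ t) :
    μ {ω | c < M ω} * μ {ω | t < I ω} ≤ μ {ω | c * t < I ω} := by
  have hItld : μ {ω | t < I ω} = μ (Itld ⁻¹' Ioi t) := by
    rw [← Measure.map_apply hItldm measurableSet_Ioi, hsame, Measure.map_apply hIm measurableSet_Ioi]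
    rfl
  calc μ {ω | c < M ω} * μ {ω | t < I ω}
      = μ ((fun ω => (Q ω, M ω)) ⁻¹' (univ ×ˢ Ioi c)) * μ (Itld ⁻¹' Ioi t) := by
        rw [hItld]; simp [preimage, mem_prod]
    _ = μ ((fun ω => (Q ω, M ω)) ⁻¹' (univ ×ˢ Ioi c) ∩ Itld ⁻¹' Ioi t) :=
        (hindep.measure_inter_preimage_eq_mul _ _
          (MeasurableSet.univ.prod measurableSet_Ioi) measurableSet_Ioi).symm
    _ ≤ μ ((fun ω => Q ω + M ω * Itld ω) ⁻¹' Ioi (c * t)) := measure_mono ?_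
    _ = μ {ω | c * t < I ω} := by
        rw [← Measure.map_apply (by fun_prop) measurableSet_Ioi, ← hperp,
          Measure.map_apply hIm measurableSet_Ioi]
        rfl
  rintro ω ⟨⟨-, hMω⟩, hIω⟩
  simp only [mem_preimage, mem_Ioi] at hMω hIω ⊢
  nlinarith [hQ0 ω]

section GeometricGrowth

variable {G : ℝ → ℝ} {p c : ℝ}

theorem mul_pow_le_apply_pow (hp : 0 ≤ p) (hc : 1 ≤ c)
    (hrec : ∀ t, 1 ≤ t → p * G t ≤ G (c * t)) (n : ℕ) : G 1 * p ^ n ≤ G (c ^ n) := by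
  induction n with
  | zero => simp
  | succ n ih =>
    calc G 1 * p ^ (n + 1) = p * (G 1 * p ^ n) := by ring
      _ ≤ p * G (c ^ n) := by gcongr
      _ ≤ G (c * c ^ n) := hrec _ (one_le_pow₀ hc)
      _ = G (c ^ (n + 1)) := by rw [pow_succ']

theorem Antitone.log_mul_add_mul_log_le (hG : Antitone G) (hG1 : 0 < G 1) (hp0 : 0 < p)
    (hp1 : p ≤ 1) (hc : 1 < c) (hrec : ∀ t, 1 ≤ t → p * G t ≤ G (c * t)) {t : ℝ} (ht : 1 ≤ t) :
    log (G 1 * p) + log p / log c * log t ≤ log (G t) := by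
  have hlogc : 0 < log c := log_pos hc
  set n := ⌈log t / log c⌉₊
  have hn : (n : ℝ) ≤ log t / log c + 1 :=
    (Nat.ceil_lt_add_one (div_nonneg (log_nonneg ht) hlogc.le)).le
  have htn : t ≤ c ^ n := by
    rw [← log_le_log_iff (by linarith) (by positivity), log_pow, ← div_le_iff₀ hlogc]
    exact Nat.le_ceil _
  have hGt : G 1 * p ^ n ≤ G t := (mul_pow_le_apply_pow hp0.le hc.le hrec n).trans (hG htn)
  calc log (G 1 * p) + log p / log c * log t
      = log (G 1) + (log t / log c + 1) * log p := by
        rw [log_mul hG1.ne' hp0.ne']; ring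
    _ ≤ log (G 1) + n * log p := by
        gcongr log (G 1) + ?_
        exact mul_le_mul_of_nonpos_right hn (log_nonpos hp0.le hp1)
    _ = log (G 1 * p ^ n) := by rw [log_mul hG1.ne' (by positivity), log_pow]
    _ ≤ log (G t) := log_le_log (by positivity) hGt

theorem exists_eventually_le_div_log_of_le_add_mul_log {f : ℝ → ℝ} {K β : ℝ}
    (h : ∀ᶠ t in atTop, K + β * log t ≤ f t) : ∃ C, ∀ᶠ t in atTop, C ≤ f t / log t := by
  have hK : Tendsto (fun t => K / log t) atTop (𝓝 0) :=
    tendsto_const_nhds.div_atTop tendsto_log_atTop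
  refine ⟨β - 1, ?_⟩
  filter_upwards [h, hK.eventually (lt_mem_nhds (neg_one_lt_zero (R := ℝ))),
    tendsto_log_atTop.eventually_gt_atTop 0] with t hft hKt hlogt
  rw [lt_div_iff₀ hlogt] at hKt
  rw [le_div_iff₀ hlogt]
  linarith

theorem Antitone.exists_eventually_le_log_div_log (hG : Antitone G) (hG0 : ∀ t, 0 ≤ G t)
    (hp0 : 0 < p) (hp1 : p ≤ 1) (hc : 1 < c) (hrec : ∀ t, 1 ≤ t → p * G t ≤ G (c * t)) :
    ∃ C, ∀ᶠ t in atTop, C ≤ log (G t) / log t := by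
  rcases (hG0 1).eq_or_lt with hG1 | hG1
  · refine ⟨0, ?_⟩
    filter_upwards [eventually_ge_atTop 1] with t ht
    simp [le_antisymm (hG1 ▸ hG ht) (hG0 t)]
  · exact exists_eventually_le_div_log_of_le_add_mul_log <| (eventually_ge_atTop 1).mono
      fun t ht => hG.log_mul_add_mul_log_le hG1 hp0 hp1 hc hrec ht

end GeometricGrowth

theorem bot_lt_liminf_coe_of_eventually_le {α : Type*} {l : Filter α} {g : α → ℝ} {C : ℝ}
    (h : ∀ᶠ x in l, C ≤ g x) : ⊥ < liminf (fun x => (g x : EReal)) l :=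
  (EReal.bot_lt_coe C).trans_le <|
    le_liminf_of_le (by isBoundedDefault) (h.mono fun _ hx => EReal.coe_le_coe hx)

theorem perpetuity_pareto_tail_general
    {Ω : Type*} [MeasureSpace Ω] [IsProbabilityMeasure (volume : Measure Ω)]
    (I Itld Q M : Ω → ℝ)
    (hIm : Measurable I) (hItldm : Measurable Itld)
    (hQm : Measurable Q) (hMm : Measurable M)
    (hQ0 : ∀ ω, 0 ≤ Q ω)
    (hindep : IndepFun (fun ω => (Q ω, M ω)) Itld)
    (hsame : Measure.map Itld volume = Measure.map I volume)
    (hperp : Measure.map I volume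
      = Measure.map (fun ω => Q ω + M ω * Itld ω) volume)
    (hM1 : 0 < volume {ω | 1 < M ω}) :
    ⊥ < Filter.liminf
      (fun t : ℝ =>
        ((Real.log ((volume {ω | t < I ω}).toReal) / Real.log t : ℝ) : EReal))
      atTop := by
  obtain ⟨ε, hε, hp⟩ := exists_pos_measure_add_lt hM1
  have hG : Antitone fun t => volume.real {ω | t < I ω} :=
    fun s t hst => measureReal_mono fun ω hω => hst.trans_lt hω
  have hrec : ∀ t, 1 ≤ t → volume.real {ω | 1 + ε < M ω} * volume.real {ω | t < I ω}
      ≤ volume.real {ω | (1 + ε) * t < I ω} := fun t ht => by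
    simp only [measureReal_def, ← ENNReal.toReal_mul]
    exact ENNReal.toReal_mono (measure_ne_top _ _) <| measure_lt_mul_measure_lt_le_of_perpetuity
      hIm hItldm hQm hMm hQ0 hindep hsame hperp (by linarith) (by linarith)
  obtain ⟨C, hC⟩ := hG.exists_eventually_le_log_div_log (fun _ => measureReal_nonneg)
    (ENNReal.toReal_pos hp.ne' (measure_ne_top _ _)) measureReal_le_one (by linarith) hrec
  exact bot_lt_liminf_coe_of_eventually_le hC

/-- Goldie–Grübel: a perpetuity `I =d Q + M Ĩ` with `(Q,M) ⊥ Ĩ`,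
`Ĩ =d I`, `Q, M ≥ 0` and `P(M > 1) > 0`, has a tail at least of power-law type:
`liminf_{t→∞} log P(I > t) / log t > -∞`. -/
theorem perpetuity_pareto_tail
    {Ω : Type*} [MeasureSpace Ω] [IsProbabilityMeasure (volume : Measure Ω)]
    (I Itld Q M : Ω → ℝ)
    (hIm : Measurable I) (hItldm : Measurable Itld)
    (hQm : Measurable Q) (hMm : Measurable M)
    (hQ0 : ∀ ω, 0 ≤ Q ω) (hM0 : ∀ ω, 0 ≤ M ω) (hI0 : ∀ ω, 0 ≤ I ω)
    (hindep : IndepFun (fun ω => (Q ω, M ω)) Itld)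
    (hsame : Measure.map Itld volume = Measure.map I volume)
    (hperp : Measure.map I volume
      = Measure.map (fun ω => Q ω + M ω * Itld ω) volume)
    (hM1 : 0 < volume {ω | 1 < M ω}) :
    ⊥ < Filter.liminf
      (fun t : ℝ =>
        ((Real.log ((volume {ω | t < I ω}).toReal) / Real.log t : ℝ) : EReal))
      atTop :=
  perpetuity_pareto_tail_general I Itld Q M hIm hItldm hQm hMm hQ0 hindep hsame hperp hM1
end
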